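/- One-step descent for L-smooth functions with biased updates: if F is L-smooth, Δ is a random vector with ‖E[Δ] + η Q ∇F(θ)‖ ≤ B η² Q² ζ and E‖Δ‖² ≤ V η² (Qσ² + Q²ζ²), and η Q ≤ min{1/(2L), 1}, then E[F(θ + Δ)] ≤ F(θ) − (3/4)·ηQ·‖∇F(θ)‖² + (LV/2 + B²)·η²·(Qσ² + Q²ζ²). -/

import Mathlib

open MeasureTheory

lemma smooth_descent_aux (p : ℕ) (F : EuclideanSpace ℝ (Fin p) → ℝ) (L : ℝ)
    (hFdiff : Differentiable ℝ F)
    (hFsmooth : ∀ x y, ‖gradient F x - gradient F y‖ ≤ L * ‖x - y‖)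
    (θ v : EuclideanSpace ℝ (Fin p)) :
    F (θ + v) ≤ F θ + inner ℝ (gradient F θ) v + L / 2 * ‖v‖ ^ 2 := by
  set g := gradient F θ with hg
  set φ : ℝ → ℝ := fun t => F (θ + t • v) - t * inner ℝ g v - L / 2 * t ^ 2 * ‖v‖ ^ 2 with hφ
  have hψ : ∀ t : ℝ, HasDerivAt (fun s : ℝ => θ + s • v) v t := fun t => by
    simpa using ((hasDerivAt_id t).smul_const v).const_add θ
  have hder : ∀ t : ℝ, HasDerivAt φ
      ((inner ℝ (gradient F (θ + t • v)) v : ℝ) - inner ℝ g v - L * t * ‖v‖ ^ 2) t := by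
    intro t
    have h1 : HasDerivAt (fun s : ℝ => F (θ + s • v))
        ((inner ℝ (gradient F (θ + t • v)) v : ℝ)) t := by
      have := (hFdiff (θ + t • v)).hasGradientAt.hasFDerivAt.comp_hasDerivAt t (hψ t)
      simp [InnerProductSpace.toDual] at this
      rw [gradient, InnerProductSpace.toDual_symm_apply]
      exact this
    have h2 : HasDerivAt (fun s : ℝ => s * (inner ℝ g v : ℝ)) (inner ℝ g v : ℝ) t := by
      simpa using (hasDerivAt_id t).mul_const (inner ℝ g v : ℝ)
    have h3 : HasDerivAt (fun s : ℝ => L / 2 * s ^ 2 * ‖v‖ ^ 2) (L * t * ‖v‖ ^ 2) t := by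
      have := ((hasDerivAt_pow 2 t).const_mul (L / 2)).mul_const (‖v‖ ^ 2)
      rw [show L * t * ‖v‖ ^ 2 = L / 2 * (((2 : ℕ) : ℝ) * t ^ (2 - 1)) * ‖v‖ ^ 2 by push_cast; ring]
      exact this
    exact (h1.sub h2).sub h3
  have hmono : AntitoneOn φ (Set.Icc (0:ℝ) 1) := by
    apply antitoneOn_of_deriv_nonpos (convex_Icc 0 1)
    · exact (Continuous.continuousOn (continuous_iff_continuousAt.2 fun t => (hder t).continuousAt))
    · intro t ht
      exact (hder t).differentiableAt.differentiableWithinAt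
    · intro t ht
      rw [(hder t).deriv]
      have ht0 : 0 ≤ t := (Set.mem_Ioo.mp (by simpa using ht)).1.le
      have hcs : (inner ℝ (gradient F (θ + t • v)) v : ℝ) - inner ℝ g v ≤ L * t * ‖v‖ ^ 2 := by
        have h1 : (inner ℝ (gradient F (θ + t • v)) v : ℝ) - inner ℝ g v
            = inner ℝ (gradient F (θ + t • v) - g) v := by
          rw [inner_sub_left]
        rw [h1]
        calc (inner ℝ (gradient F (θ + t • v) - g) v : ℝ)
            ≤ ‖gradient F (θ + t • v) - g‖ * ‖v‖ := real_inner_le_norm _ _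
          _ ≤ (L * ‖θ + t • v - θ‖) * ‖v‖ := by
              apply mul_le_mul_of_nonneg_right _ (norm_nonneg v)
              simpa [hg] using hFsmooth (θ + t • v) θ
          _ = L * t * ‖v‖ ^ 2 := by
              simp [norm_smul, abs_of_nonneg ht0]
              ring
      linarith
  have key := hmono (Set.left_mem_Icc.mpr one_pos.le) (Set.right_mem_Icc.mpr one_pos.le) one_pos.le
  simp only [hφ, one_smul, one_mul, one_pow, zero_smul, zero_mul, mul_zero, add_zero,
    sub_zero, zero_pow, pow_zero] at key
  linarith

/-- One-step descent for `L`-smooth functions with biased updates: if `F` is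
`L`-smooth, `Δ` is a random vector with bias bound
`‖E[Δ] + ηQ∇F(θ)‖ ≤ B η² Q² ζ` and second-moment bound
`E‖Δ‖² ≤ V η² (Qσ² + Q²ζ²)`, and `ηQ ≤ min{1/(2L), 1}`, then
`E[F(θ + Δ)] ≤ F(θ) - (3/4)ηQ‖∇F(θ)‖² + (LV/2 + B²)η²(Qσ² + Q²ζ²)`. -/
theorem one_step_descent {Ω : Type*} [MeasurableSpace Ω]
    (μ : Measure Ω) [IsProbabilityMeasure μ]
    (p : ℕ) (F : EuclideanSpace ℝ (Fin p) → ℝ) (L : ℝ) (hL : 0 < L)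
    (hFdiff : Differentiable ℝ F)
    (hFsmooth : ∀ x y, ‖gradient F x - gradient F y‖ ≤ L * ‖x - y‖)
    (θ : EuclideanSpace ℝ (Fin p)) (Δ : Ω → EuclideanSpace ℝ (Fin p))
    (η Q B V σ ζ : ℝ) (hη : 0 ≤ η) (hQ : 0 ≤ Q) (hB : 0 ≤ B) (hV : 0 ≤ V)
    (hσ : 0 ≤ σ) (hζ : 0 ≤ ζ)
    (hstep : η * Q ≤ min (1 / (2 * L)) 1)
    (hΔint : Integrable Δ μ)
    (hΔsq : Integrable (fun ω => ‖Δ ω‖ ^ 2) μ)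
    (hFint : Integrable (fun ω => F (θ + Δ ω)) μ)
    (hbias : ‖(∫ ω, Δ ω ∂μ) + (η * Q) • gradient F θ‖ ≤ B * η ^ 2 * Q ^ 2 * ζ)
    (hmoment : ∫ ω, ‖Δ ω‖ ^ 2 ∂μ ≤ V * η ^ 2 * (Q * σ ^ 2 + Q ^ 2 * ζ ^ 2)) :
    ∫ ω, F (θ + Δ ω) ∂μ ≤
      F θ - (3 / 4) * (η * Q) * ‖gradient F θ‖ ^ 2 +
        (L * V / 2 + B ^ 2) * η ^ 2 * (Q * σ ^ 2 + Q ^ 2 * ζ ^ 2) := by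

  set g := gradient F θ with hg
  set m := ∫ ω, Δ ω ∂μ with hm
  have ha : 0 ≤ η * Q := mul_nonneg hη hQ
  have ha1 : η * Q ≤ 1 := hstep.trans (min_le_right _ _)
  -- integrability of each piece
  have hinner_int : Integrable (fun ω => (inner ℝ g (Δ ω) : ℝ)) μ :=
    (innerSL ℝ g).integrable_comp hΔint
  have hrhs_int : Integrable (fun ω => F θ + (inner ℝ g (Δ ω) : ℝ) + L / 2 * ‖Δ ω‖ ^ 2) μ :=
    ((integrable_const _).add hinner_int).add (hΔsq.const_mul _)
  have hmono : ∫ ω, F (θ + Δ ω) ∂μ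
      ≤ ∫ ω, (F θ + (inner ℝ g (Δ ω) : ℝ) + L / 2 * ‖Δ ω‖ ^ 2) ∂μ := by
    apply integral_mono hFint hrhs_int
    intro ω
    exact smooth_descent_aux p F L hFdiff hFsmooth θ (Δ ω)
  have hsplit : ∫ ω, (F θ + (inner ℝ g (Δ ω) : ℝ) + L / 2 * ‖Δ ω‖ ^ 2) ∂μ
      = F θ + (inner ℝ g m : ℝ) + L / 2 * ∫ ω, ‖Δ ω‖ ^ 2 ∂μ := by
    have hcomm := (innerSL ℝ g).integral_comp_comm hΔint
    simp only [innerSL_apply_apply] at hcomm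
    calc ∫ ω, (F θ + (inner ℝ g (Δ ω) : ℝ) + L / 2 * ‖Δ ω‖ ^ 2) ∂μ
        = (∫ ω, (F θ + (inner ℝ g (Δ ω) : ℝ)) ∂μ) + ∫ ω, L / 2 * ‖Δ ω‖ ^ 2 ∂μ :=
          integral_add ((integrable_const (F θ)).add hinner_int) (hΔsq.const_mul (L / 2))
      _ = ((∫ _, F θ ∂μ) + ∫ ω, (inner ℝ g (Δ ω) : ℝ) ∂μ) + ∫ ω, L / 2 * ‖Δ ω‖ ^ 2 ∂μ := by
          rw [integral_add (integrable_const (F θ)) hinner_int]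
      _ = F θ + (inner ℝ g m : ℝ) + L / 2 * ∫ ω, ‖Δ ω‖ ^ 2 ∂μ := by
          rw [integral_const, hcomm, integral_const_mul, ← hm]
          simp
  -- bound the inner ℝ product term
  have hip : (inner ℝ g m : ℝ)
      ≤ -((η * Q) * ‖g‖ ^ 2) + ‖g‖ * (B * η ^ 2 * Q ^ 2 * ζ) := by
    have e1 : (inner ℝ g (m + (η * Q) • g) : ℝ) = inner ℝ g m + (η * Q) * ‖g‖ ^ 2 := by
      rw [inner_add_right, real_inner_smul_right, real_inner_self_eq_norm_sq]
    have e2 : (inner ℝ g (m + (η * Q) • g) : ℝ) ≤ ‖g‖ * (B * η ^ 2 * Q ^ 2 * ζ) :=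
      (real_inner_le_norm _ _).trans
        (mul_le_mul_of_nonneg_left hbias (norm_nonneg g))
    linarith
  have hamgm : ‖g‖ * (B * η ^ 2 * Q ^ 2 * ζ)
      ≤ (η * Q) / 4 * ‖g‖ ^ 2 + B ^ 2 * η ^ 2 * (Q * σ ^ 2 + Q ^ 2 * ζ ^ 2) := by
    nlinarith [mul_nonneg ha (sq_nonneg (‖g‖ - 2 * B * η * Q * ζ)),
      mul_nonneg (sq_nonneg (B * η * Q * ζ)) (sub_nonneg.mpr ha1),
      mul_nonneg (mul_nonneg (sq_nonneg B) (sq_nonneg η)) (mul_nonneg hQ (sq_nonneg σ))]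
  have hmom2 : L / 2 * ∫ ω, ‖Δ ω‖ ^ 2 ∂μ
      ≤ L / 2 * (V * η ^ 2 * (Q * σ ^ 2 + Q ^ 2 * ζ ^ 2)) :=
    mul_le_mul_of_nonneg_left hmoment (by positivity)
  have hfinal : (L * V / 2 + B ^ 2) * η ^ 2 * (Q * σ ^ 2 + Q ^ 2 * ζ ^ 2)
      = L / 2 * (V * η ^ 2 * (Q * σ ^ 2 + Q ^ 2 * ζ ^ 2))
        + B ^ 2 * η ^ 2 * (Q * σ ^ 2 + Q ^ 2 * ζ ^ 2) := by ring
  have hthreequarter : -((η * Q) * ‖g‖ ^ 2) + (η * Q) / 4 * ‖g‖ ^ 2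
      = -(3 / 4 * (η * Q) * ‖g‖ ^ 2) := by ring
  rw [hsplit] at hmono
  linarith
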